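/- If a nonzero right R-module M is iso-simple and injective, then M is simple. -/

import Mathlib

universe u

open MulOpposite

/-- A nonzero module is iso-simple if it is isomorphic to each of its nonzero submodules. -/
def IsIsoSimpleModule (A : Type u) [Ring A] (M : Type u) [AddCommGroup M] [Module A M] : Prop :=
  Nontrivial M ∧ ∀ N : Submodule A M, N ≠ ⊥ → Nonempty (M ≃ₗ[A] N)

/-!
An injective module that is isomorphic to all its nonzero submodules has every nonzero submodule
injective, hence a direct summand; so it is semisimple and contains a simple submodule, to which
it is itself isomorphic.
-/

theorem Module.Injective.of_linearEquiv {A : Type*} [Ring A] {Q Q' : Type u}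
    [AddCommGroup Q] [Module A Q] [AddCommGroup Q'] [Module A Q'] [Module.Injective A Q]
    (e : Q ≃ₗ[A] Q') : Module.Injective A Q' where
  out _ _ _ _ _ _ f hf g :=
    let ⟨h, hh⟩ := Module.Injective.out f hf (e.symm.toLinearMap ∘ₗ g)
    ⟨e.toLinearMap ∘ₗ h, fun x ↦ by simp [hh x]⟩

theorem Submodule.exists_isCompl_of_injective {A : Type*} [Ring A] {M : Type*}
    [AddCommGroup M] [Module A M] (N : Submodule A M) [Module.Injective A N] :
    ∃ C : Submodule A M, IsCompl N C :=
  let ⟨_, hp⟩ := Module.Injective.out N.subtype N.injective_subtype LinearMap.id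
  ⟨_, LinearMap.isCompl_of_proj hp⟩

namespace IsIsoSimpleModule

variable {A : Type u} [Ring A] {M : Type u} [AddCommGroup M] [Module A M]

theorem isSemisimpleModule [Module.Injective A M] (h : IsIsoSimpleModule A M) :
    IsSemisimpleModule A M where
  exists_isCompl N := by
    rcases eq_or_ne N ⊥ with rfl | hN
    · exact ⟨⊤, isCompl_bot_top⟩
    · obtain ⟨e⟩ := h.2 N hN
      have : Module.Injective A N := .of_linearEquiv e
      exact N.exists_isCompl_of_injective

theorem isSimpleModule_of_submodule (h : IsIsoSimpleModule A M) (S : Submodule A M)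
    [IsSimpleModule A S] : IsSimpleModule A M :=
  let ⟨e⟩ := h.2 S (IsSimpleModule.isAtom (R := A)).ne_bot
  .congr e

end IsIsoSimpleModule

/-- If a nonzero right `R`-module `M` is iso-simple and injective, then `M` is simple. -/
theorem isSimpleModule_of_isoSimple_of_injective (R : Type u) [Ring R]
    (M : Type u) [AddCommGroup M] [Module Rᵐᵒᵖ M]
    (h1 : IsIsoSimpleModule Rᵐᵒᵖ M) (h2 : Module.Injective Rᵐᵒᵖ M) :
    IsSimpleModule Rᵐᵒᵖ M := by
  have : Nontrivial M := h1.1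
  have : IsSemisimpleModule Rᵐᵒᵖ M := h1.isSemisimpleModule
  obtain ⟨S, hS⟩ := IsSemisimpleModule.exists_simple_submodule Rᵐᵒᵖ M
  exact h1.isSimpleModule_of_submodule S
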